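/- Fix n ∈ ℕ, n ≥ 1, and let H ∈ ℝ^{n×n} be the matrix H(i,j) = 1{i ≥ j}/(n − j + 1). Define the makespan objective Minimax(x) = max_{i∈[n]} x(i). Then sup { Minimax(Hℓ)/Minimax(ℓ) : ℓ ∈ ℝ^n, 0 ≤ ℓ(1) ≤ ℓ(2) ≤ ⋯ ≤ ℓ(n), ℓ(n) > 0 } = H_n, where H_n = Σ_{i=1}^n 1/i is the n-th harmonic number; equivalently, sup over such ℓ of (Σ_{i∈[n]} ℓ(i)/(n − i + 1))/ℓ(n) = H_n. Consequently, the competitive ratio of water-filling for makespan minimization with n offline nodes equals H_n. -/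

import Mathlib

/-!
Upper bound. Let water-filling end with loads `L` and let some feasible assignment have makespan
`T`. For a threshold `c ≥ 0`, the water of node `i` above level `c` was poured by steps whose
water level exceeds `c`; the neighbourhoods of those steps lie in `{j | c < L j}`, so any
assignment puts all their quantity there and `∑ i, (L i - c)⁺ ≤ T * #{j | c < L j}`. Taking
for `c` the successive loads in decreasing order, the partial sums `S k` of the sorted loads
satisfy `S k / k - S (k+1) / (k+1) ≤ T / (k+1)`, which telescopes to `max L ≤ H_n T`. For
sorted `ℓ` the bound `∑ ℓ i / (n - i) ≤ H_n ℓ (n-1)` is immediate.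

Lower bound. When unit request `t` may go to the nodes `i ≥ t`, water-filling splits each
request evenly and produces `H 1`, with makespan `H_n`, while the assignment of request `t`
to node `t` gives the all-ones vector, which is majorized by every vector with the same total.
-/

open Finset MeasureTheory

/-- A request sequence with `n` offline nodes and `m` online nodes: each online
node `t` has a nonempty neighborhood `N t ⊆ [n]` and a positive quantity `q t`. -/
structure ReqSeq (n m : ℕ) where
  N : Fin m → Finset (Fin n)
  q : Fin m → ℝ
  N_nonempty : ∀ t, (N t).Nonempty
  q_pos : ∀ t, 0 < q t

/-- `Δ(N, q)`: feasible allocations for a single online node. -/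
def allocSet (n : ℕ) (N : Finset (Fin n)) (qt : ℝ) : Set (Fin n → ℝ) :=
  {x | (∀ i, 0 ≤ x i) ∧ (∀ i, i ∉ N → x i = 0) ∧ ∑ i, x i = qt}

/-- A feasible allocation trajectory on a request sequence. -/
def Feasible {n m : ℕ} (E : ReqSeq n m) (x : Fin m → Fin n → ℝ) : Prop :=
  ∀ t, x t ∈ allocSet n (E.N t) (E.q t)

/-- `Δ(E)`: the Minkowski sum of the per-node allocation sets (feasible load vectors). -/
def loads {n m : ℕ} (E : ReqSeq n m) : Set (Fin n → ℝ) :=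
  {ℓ | ∃ x, Feasible E x ∧ ℓ = ∑ t, x t}

/-- Sum of the `k` largest entries of `x`. -/
noncomputable def topSum {n : ℕ} (x : Fin n → ℝ) (k : ℕ) : ℝ :=
  sSup ((fun s : Finset (Fin n) => ∑ i ∈ s, x i) '' {s | s.card = k})

/-- `Majorizes x y` means `x ⪰ y`: equal total sums and every `k`-largest-entries
sum of `x` dominates that of `y`. -/
def Majorizes {n : ℕ} (x y : Fin n → ℝ) : Prop :=
  (∑ i, x i = ∑ i, y i) ∧ ∀ k ≤ n, topSum y k ≤ topSum x k

/-- `f` is Schur-concave on the nonnegative orthant: `x ⪯ y → f x ≥ f y`. -/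
def SchurConcave {n : ℕ} (f : (Fin n → ℝ) → ℝ) : Prop :=
  ∀ x y : Fin n → ℝ, (∀ i, 0 ≤ x i) → (∀ i, 0 ≤ y i) → Majorizes y x → f y ≤ f x

/-- `g` is Schur-convex on the nonnegative orthant: `x ⪯ y → g x ≤ g y`. -/
def SchurConvex {n : ℕ} (g : (Fin n → ℝ) → ℝ) : Prop :=
  ∀ x y : Fin n → ℝ, (∀ i, 0 ≤ x i) → (∀ i, 0 ≤ y i) → Majorizes y x → g x ≤ g y

/-- Cumulative load strictly before online node `t`. -/
def prevLoad {n m : ℕ} (x : Fin m → Fin n → ℝ) (t : Fin m) : Fin n → ℝ :=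
  fun i => ∑ s ∈ Finset.univ.filter (fun s => s < t), x s i

/-- Minimum of `v` over the neighborhood of online node `t`. -/
noncomputable def minOnNbhd {n m : ℕ} (E : ReqSeq n m) (t : Fin m) (v : Fin n → ℝ) : ℝ :=
  (E.N t).inf' (E.N_nonempty t) v

/-- `x` is the water-filling allocation trajectory on `E`: at each arrival `t`,
`x t` maximizes the minimum post-allocation load over `N t`. -/
def IsWFAlloc {n m : ℕ} (E : ReqSeq n m) (x : Fin m → Fin n → ℝ) : Prop :=
  Feasible E x ∧
  ∀ t, ∀ y ∈ allocSet n (E.N t) (E.q t),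
    minOnNbhd E t (fun i => y i + prevLoad x t i) ≤ minOnNbhd E t (fun i => x t i + prevLoad x t i)

-- The load vector produced by water-filling (via choice; the trajectory exists and is unique).
open Classical in
noncomputable def wfLoad {n m : ℕ} (E : ReqSeq n m) : Fin n → ℝ :=
  if h : ∃ x, IsWFAlloc E x then ∑ t, h.choose t else 0

/-- `ℓ` is the majorization-minimal element of `Δ(E)`. -/
def IsOpt {n m : ℕ} (E : ReqSeq n m) (ℓ : Fin n → ℝ) : Prop :=
  ℓ ∈ loads E ∧ ∀ ℓ' ∈ loads E, Majorizes ℓ' ℓ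

-- `OPT(E)`, the majorization-minimal feasible load vector (via choice).
open Classical in
noncomputable def optLoad {n m : ℕ} (E : ReqSeq n m) : Fin n → ℝ :=
  if h : ∃ ℓ, IsOpt E ℓ then h.choose else 0

/-- A request sequence is nested if `N 1 ⊇ N 2 ⊇ ⋯ ⊇ N m`. -/
def IsNested {n m : ℕ} (E : ReqSeq n m) : Prop :=
  ∀ s t : Fin m, s ≤ t → E.N t ⊆ E.N s

/-- `E_{n,m,q}`: request sequences with total quantity `q`. -/
def seqs (n m : ℕ) (q : ℝ) : Set (ReqSeq n m) := {E | ∑ t, E.q t = q}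

/-- The harmonic-series matrix applied to a vector: `(Hℓ)(i) = Σ_{j ≤ i} ℓ(j)/(n − j + 1)`
(in 1-indexed notation). -/
noncomputable def Hvec (n : ℕ) (ℓ : Fin n → ℝ) : Fin n → ℝ :=
  fun i => ∑ j ∈ Finset.univ.filter (fun j => j ≤ i), ℓ j / ((n - (j : ℕ) : ℕ) : ℝ)

/-- The water-filling height of online node `t`: the common post-allocation load of
the offline nodes in the support of `x t`. -/
noncomputable def height {n m : ℕ} (x : Fin m → Fin n → ℝ) (t : Fin m) : ℝ :=
  sSup {c | ∃ i, 0 < x t i ∧ c = x t i + prevLoad x t i}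


/-- The makespan objective `Minimax(x) = max_i x(i)`. -/
noncomputable def maxEntry {n : ℕ} (x : Fin n → ℝ) : ℝ := sSup (Set.range x)

/-- The `n`-th harmonicNum number `H_n = Σ_{i=1}^n 1/i`. -/
noncomputable def harmonicNum (n : ℕ) : ℝ := ∑ i ∈ Finset.range n, (1 : ℝ) / (i + 1)

lemma le_maxEntry {n : ℕ} (x : Fin n → ℝ) (i : Fin n) : x i ≤ maxEntry x :=
  le_csSup (Set.finite_range x).bddAbove ⟨i, rfl⟩

lemma maxEntry_le {n : ℕ} [NeZero n] {x : Fin n → ℝ} {c : ℝ} (h : ∀ i, x i ≤ c) :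
    maxEntry x ≤ c :=
  csSup_le (Set.range_nonempty x) (Set.forall_mem_range.2 h)

lemma maxEntry_const {n : ℕ} [NeZero n] (c : ℝ) : maxEntry (fun _ : Fin n => c) = c := by
  rw [maxEntry, Set.range_const, csSup_singleton]

lemma Monotone.maxEntry_eq {n : ℕ} {x : Fin n → ℝ} (hx : Monotone x) (hn : 1 ≤ n) :
    maxEntry x = x ⟨n - 1, Nat.sub_lt hn one_pos⟩ :=
  have : NeZero n := ⟨by omega⟩
  le_antisymm (maxEntry_le fun i => hx (Fin.le_def.2 (by simp; omega))) (le_maxEntry x _)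

lemma harmonicNum_succ (k : ℕ) : harmonicNum (k + 1) = harmonicNum k + 1 / (k + 1) := by
  rw [harmonicNum, harmonicNum, sum_range_succ]

lemma harmonicNum_one : harmonicNum 1 = 1 := by
  simp [harmonicNum]

lemma harmonicNum_nonneg (n : ℕ) : 0 ≤ harmonicNum n :=
  sum_nonneg fun _ _ => by positivity

lemma sum_one_div_sub_eq_harmonicNum (n : ℕ) :
    ∑ j : Fin n, 1 / ((n - (j : ℕ) : ℕ) : ℝ) = harmonicNum n := by
  rw [harmonicNum, Fin.sum_univ_eq_sum_range (fun j => 1 / ((n - j : ℕ) : ℝ)),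
    ← sum_range_reflect (fun j => 1 / ((j : ℝ) + 1))]
  refine sum_congr rfl fun j hj => ?_
  rw [mem_range] at hj
  rw [show n - j = n - 1 - j + 1 by omega]
  push_cast
  ring

lemma sum_div_le_harmonicNum_mul {n : ℕ} {ℓ : Fin n → ℝ} {M : ℝ} (h : ∀ i, ℓ i ≤ M) :
    ∑ i : Fin n, ℓ i / ((n - (i : ℕ) : ℕ) : ℝ) ≤ harmonicNum n * M := by
  rw [← sum_one_div_sub_eq_harmonicNum, sum_mul]
  exact sum_le_sum fun i _ => by
    rw [one_div_mul_eq_div]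
    exact div_le_div_of_nonneg_right (h i) (Nat.cast_nonneg _)

lemma Hvec_monotone {n : ℕ} {ℓ : Fin n → ℝ} (hℓ : ∀ i, 0 ≤ ℓ i) : Monotone (Hvec n ℓ) :=
  fun _ _ hab => sum_le_sum_of_subset_of_nonneg
    (fun j hj => mem_filter.2 ⟨mem_univ j, (mem_filter.1 hj).2.trans hab⟩)
    fun j _ _ => div_nonneg (hℓ j) (Nat.cast_nonneg _)

lemma Hvec_last {n : ℕ} (hn : 1 ≤ n) (ℓ : Fin n → ℝ) :
    Hvec n ℓ ⟨n - 1, Nat.sub_lt hn one_pos⟩ = ∑ j : Fin n, ℓ j / ((n - (j : ℕ) : ℕ) : ℝ) := by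
  rw [Hvec, filter_true_of_mem fun j _ => Fin.le_def.2 (by simp; omega)]

lemma maxEntry_Hvec_div_maxEntry {n : ℕ} (hn : 1 ≤ n) {ℓ : Fin n → ℝ} (h0 : ∀ i, 0 ≤ ℓ i)
    (hℓ : Monotone ℓ) :
    maxEntry (Hvec n ℓ) / maxEntry ℓ
      = (∑ i, ℓ i / ((n - (i : ℕ) : ℕ) : ℝ)) / ℓ ⟨n - 1, Nat.sub_lt hn one_pos⟩ := by
  rw [(Hvec_monotone h0).maxEntry_eq hn, hℓ.maxEntry_eq hn, Hvec_last hn]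

lemma sum_div_div_last_le_harmonicNum {n : ℕ} (hn : 1 ≤ n) {ℓ : Fin n → ℝ} (hℓ : Monotone ℓ)
    (hpos : 0 < ℓ ⟨n - 1, Nat.sub_lt hn one_pos⟩) :
    (∑ i, ℓ i / ((n - (i : ℕ) : ℕ) : ℝ)) / ℓ ⟨n - 1, Nat.sub_lt hn one_pos⟩ ≤ harmonicNum n :=
  div_le_of_le_mul₀ hpos.le (harmonicNum_nonneg n)
    (sum_div_le_harmonicNum_mul fun i => hℓ (Fin.le_def.2 (by simp; omega)))

section allocSet

variable {n : ℕ} {N : Finset (Fin n)} {q : ℝ} {x y p : Fin n → ℝ}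

lemma sum_eq_of_mem_allocSet_of_subset {S : Finset (Fin n)} (hx : x ∈ allocSet n N q)
    (hNS : N ⊆ S) : ∑ j ∈ S, x j = q := by
  rw [← hx.2.2]
  exact sum_subset (subset_univ S) fun j _ hj => hx.2.1 j fun hjN => hj (hNS hjN)

lemma exists_le_of_mem_allocSet (hN : N.Nonempty) (hx : x ∈ allocSet n N q)
    (hy : y ∈ allocSet n N q) : ∃ j ∈ N, y j ≤ x j :=
  exists_le_of_sum_le hN ((sum_eq_of_mem_allocSet_of_subset hy subset_rfl).trans
    (sum_eq_of_mem_allocSet_of_subset hx subset_rfl).symm).le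

lemma inf'_add_le_of_level_eq (hN : N.Nonempty) {h : ℝ} (hx : x ∈ allocSet n N q)
    (hlev : ∀ j ∈ N, x j + p j = h) (hy : y ∈ allocSet n N q) :
    N.inf' hN (fun j => y j + p j) ≤ N.inf' hN (fun j => x j + p j) := by
  obtain ⟨j, hj, hyx⟩ := exists_le_of_mem_allocSet hN hx hy
  calc N.inf' hN (fun j => y j + p j) ≤ y j + p j := inf'_le _ hj
    _ ≤ h := by rw [← hlev j hj]; linarith
    _ ≤ N.inf' hN (fun j => x j + p j) := le_inf' hN _ fun k hk => (hlev k hk).ge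

lemma eq_of_level_eq_of_inf'_le (hN : N.Nonempty) {h : ℝ} (hx : x ∈ allocSet n N q)
    (hlev : ∀ j ∈ N, x j + p j = h) (hy : y ∈ allocSet n N q)
    (hopt : N.inf' hN (fun j => x j + p j) ≤ N.inf' hN (fun j => y j + p j)) : y = x := by
  have hle : ∀ j ∈ N, x j ≤ y j := fun j hj => by
    have hxy := (le_inf' hN _ fun k hk => (hlev k hk).ge).trans (hopt.trans (inf'_le _ hj))
    linarith [hlev j hj]
  have heq := (sum_eq_sum_iff_of_le hle).1 <| (sum_eq_of_mem_allocSet_of_subset hx subset_rfl).trans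
    (sum_eq_of_mem_allocSet_of_subset hy subset_rfl).symm
  funext j
  by_cases hj : j ∈ N
  · exact (heq j hj).symm
  · rw [hx.2.1 j hj, hy.2.1 j hj]

lemma add_le_inf'_of_isMax (hN : N.Nonempty) (hx : x ∈ allocSet n N q)
    (hmax : ∀ y ∈ allocSet n N q,
      N.inf' hN (fun j => y j + p j) ≤ N.inf' hN (fun j => x j + p j))
    {i : Fin n} (hi : 0 < x i) : x i + p i ≤ N.inf' hN (fun j => x j + p j) := by
  set h := N.inf' hN (fun j => x j + p j)
  by_contra! hih
  have hiN : i ∈ N := by_contra fun hiN => hi.ne' (hx.2.1 i hiN)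
  -- Moving `δ` out of `i` and spreading it evenly over `N` raises every level of `N` above `h`.
  set δ := min (x i) (x i + p i - h)
  have hδ : 0 < δ := lt_min hi (by linarith)
  set ε := δ / #N
  have hε : 0 < ε := div_pos hδ (by exact_mod_cast hN.card_pos)
  set y : Fin n → ℝ := fun j => x j + (if j ∈ N then ε else 0) - (if j = i then δ else 0)
  have hy : y ∈ allocSet n N q := by
    refine ⟨fun j => ?_, fun j hj => ?_, ?_⟩
    · have hδi : δ ≤ x i := min_le_left _ _
      rcases eq_or_ne j i with rfl | hji
      · simp only [y, if_pos hiN, if_true]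
        linarith
      · simp only [y, if_neg hji]
        split_ifs <;> linarith [hx.1 j]
    · simp [y, hx.2.1 j hj, hj, show j ≠ i by rintro rfl; exact hj hiN]
    · simp only [y, sum_sub_distrib, sum_add_distrib, sum_ite_mem, univ_inter, sum_const,
        sum_ite_eq', mem_univ, if_true, nsmul_eq_mul, hx.2.2, ε]
      field_simp [hN.card_pos.ne']
      ring
  have hraise : h + ε ≤ N.inf' hN (fun j => y j + p j) := by
    refine le_inf' hN _ fun j hj => ?_
    have hhj : h ≤ x j + p j := inf'_le _ hj
    have hδh : δ ≤ x i + p i - h := min_le_right _ _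
    simp only [y, if_pos hj]
    split_ifs with hji
    · subst hji; linarith
    · linarith
  linarith [hmax y hy]

end allocSet

section WaterFilling

variable {n m : ℕ} {E : ReqSeq n m} {x : Fin m → Fin n → ℝ}

noncomputable def waterLevel (E : ReqSeq n m) (x : Fin m → Fin n → ℝ) (t : Fin m) : ℝ :=
  minOnNbhd E t (fun i => x t i + prevLoad x t i)

lemma prevLoad_congr {y : Fin m → Fin n → ℝ} {t : Fin m} (h : ∀ s < t, x s = y s) :
    prevLoad x t = prevLoad y t :=
  funext fun _ => sum_congr rfl fun s hs => by rw [h s (mem_filter.1 hs).2]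

lemma add_prevLoad_eq_sum_Iic (x : Fin m → Fin n → ℝ) (t : Fin m) (i : Fin n) :
    x t i + prevLoad x t i = ∑ s ∈ Iic t, x s i := by
  rw [← Iio_insert, sum_insert notMem_Iio_self, prevLoad]
  congr 2
  ext s
  simp

lemma Feasible.nonneg (hx : Feasible E x) (t : Fin m) (i : Fin n) : 0 ≤ x t i :=
  (hx t).1 i

lemma Feasible.add_prevLoad_le_sum (hx : Feasible E x) (t : Fin m) (i : Fin n) :
    x t i + prevLoad x t i ≤ ∑ s, x s i := by
  rw [add_prevLoad_eq_sum_Iic]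
  exact sum_le_sum_of_subset_of_nonneg (subset_univ _) fun s _ _ => hx.nonneg s i

lemma Feasible.waterLevel_le_sum (hx : Feasible E x) {t : Fin m} {j : Fin n} (hj : j ∈ E.N t) :
    waterLevel E x t ≤ ∑ s, x s j :=
  (inf'_le _ hj).trans (hx.add_prevLoad_le_sum t j)

lemma IsWFAlloc.add_prevLoad_le_waterLevel (hx : IsWFAlloc E x) {t : Fin m} {i : Fin n}
    (hi : 0 < x t i) : x t i + prevLoad x t i ≤ waterLevel E x t :=
  add_le_inf'_of_isMax (E.N_nonempty t) (hx.1 t) (hx.2 t) hi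

/-- The steps of level at most `c` that pour into `i` all come no later than the last of them,
after which `i` is at most at that step's level. -/
lemma IsWFAlloc.sum_filter_waterLevel_le (hx : IsWFAlloc E x) {c : ℝ} (hc : 0 ≤ c) (i : Fin n) :
    ∑ t with waterLevel E x t ≤ c, x t i ≤ c := by
  set S := ({t | waterLevel E x t ≤ c} : Finset (Fin m)).filter (0 < x · i)
  have hS : ∑ t with waterLevel E x t ≤ c, x t i = ∑ t ∈ S, x t i :=
    (sum_filter_of_ne fun t _ ht => (hx.1.nonneg t i).lt_of_ne' ht).symm
  rcases S.eq_empty_or_nonempty with hSe | hSne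
  · rw [hS, hSe, sum_empty]
    exact hc
  obtain ⟨hmem, ht₀⟩ := mem_filter.1 (S.max'_mem hSne)
  have ht₀c := (mem_filter.1 hmem).2
  calc ∑ t with waterLevel E x t ≤ c, x t i
      ≤ ∑ t ∈ Iic (S.max' hSne), x t i := by
        rw [hS]
        exact sum_le_sum_of_subset_of_nonneg (fun t ht => mem_Iic.2 (S.le_max' t ht))
          fun t _ _ => hx.1.nonneg t i
    _ = x (S.max' hSne) i + prevLoad x (S.max' hSne) i := (add_prevLoad_eq_sum_Iic ..).symm
    _ ≤ c := (hx.add_prevLoad_le_waterLevel ht₀).trans ht₀c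

lemma IsWFAlloc.sum_excess_le (hx : IsWFAlloc E x) {c : ℝ} (hc : 0 ≤ c) :
    ∑ i, max (∑ t, x t i - c) 0 ≤ ∑ t with c < waterLevel E x t, E.q t := by
  calc ∑ i, max (∑ t, x t i - c) 0 ≤ ∑ i, ∑ t with c < waterLevel E x t, x t i := by
        refine sum_le_sum fun i _ => max_le ?_ (sum_nonneg fun t _ => hx.1.nonneg t i)
        have hsplit := sum_filter_add_sum_filter_not univ (c < waterLevel E x ·) (x · i)
        simp only [not_lt] at hsplit
        linarith [hx.sum_filter_waterLevel_le hc i]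
    _ = ∑ t with c < waterLevel E x t, E.q t := by
        rw [sum_comm]
        exact sum_congr rfl fun t _ => (hx.1 t).2.2

lemma nonneg_of_mem_loads {ℓ : Fin n → ℝ} (hℓ : ℓ ∈ loads E) (i : Fin n) : 0 ≤ ℓ i := by
  obtain ⟨y, hy, rfl⟩ := hℓ
  rw [Finset.sum_apply]
  exact sum_nonneg fun t _ => hy.nonneg t i

lemma sum_eq_of_mem_loads {ℓ : Fin n → ℝ} (hℓ : ℓ ∈ loads E) : ∑ i, ℓ i = ∑ t, E.q t := by
  obtain ⟨y, hy, rfl⟩ := hℓ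
  simp only [Finset.sum_apply]
  rw [sum_comm]
  exact sum_congr rfl fun t _ => (hy t).2.2

lemma sum_q_le_sum_of_mem_loads {ℓ : Fin n → ℝ} (hℓ : ℓ ∈ loads E) {H : Finset (Fin m)}
    {S : Finset (Fin n)} (hHS : ∀ t ∈ H, E.N t ⊆ S) : ∑ t ∈ H, E.q t ≤ ∑ j ∈ S, ℓ j := by
  obtain ⟨y, hy, rfl⟩ := hℓ
  calc ∑ t ∈ H, E.q t = ∑ t ∈ H, ∑ j ∈ S, y t j :=
        sum_congr rfl fun t ht => (sum_eq_of_mem_allocSet_of_subset (hy t) (hHS t ht)).symm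
    _ ≤ ∑ t, ∑ j ∈ S, y t j := sum_le_sum_of_subset_of_nonneg (subset_univ H)
        fun t _ _ => sum_nonneg fun j _ => hy.nonneg t j
    _ = ∑ j ∈ S, (∑ t, y t) j := by simp only [Finset.sum_apply]; exact sum_comm

lemma IsWFAlloc.sum_excess_le_mul_card (hx : IsWFAlloc E x) {ℓ : Fin n → ℝ} (hℓ : ℓ ∈ loads E)
    {c : ℝ} (hc : 0 ≤ c) :
    ∑ i, max (∑ t, x t i - c) 0 ≤ maxEntry ℓ * #{i | c < ∑ t, x t i} := by
  calc ∑ i, max (∑ t, x t i - c) 0 ≤ ∑ t with c < waterLevel E x t, E.q t := hx.sum_excess_le hc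
    _ ≤ ∑ i with c < ∑ t, x t i, ℓ i := sum_q_le_sum_of_mem_loads hℓ fun t ht j hj =>
        mem_filter.2 ⟨mem_univ j, (mem_filter.1 ht).2.trans_le (hx.1.waterLevel_le_sum hj)⟩
    _ ≤ #{i | c < ∑ t, x t i} • maxEntry ℓ := sum_le_card_nsmul _ _ _ fun i _ => le_maxEntry ℓ i
    _ = maxEntry ℓ * #{i | c < ∑ t, x t i} := by rw [nsmul_eq_mul, mul_comm]

end WaterFilling

/-- With `S k = ∑ i < k, a i`, the hypothesis `hstep` says `S k / k - S (k+1) / (k+1) ≤ T / (k+1)`;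
summing over `k` telescopes to `a 0 - S n / n ≤ (H_n - 1) T`. -/
lemma le_harmonicNum_mul_of_sum_range_sub_le {a : ℕ → ℝ} {n : ℕ} {T : ℝ} (hn : 1 ≤ n)
    (htotal : ∑ i ∈ range n, a i ≤ n * T)
    (hstep : ∀ k < n, ∑ i ∈ range k, (a i - a k) ≤ k * T) :
    a 0 ≤ harmonicNum n * T := by
  have key : ∀ k, 1 ≤ k → k ≤ n →
      a 0 ≤ (∑ i ∈ range k, a i) / k + (harmonicNum k - 1) * T := by
    intro k hk1
    induction k, hk1 using Nat.le_induction with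
    | base => simp [harmonicNum_one]
    | succ k hk1 ih =>
      intro hkn
      have hk : (0 : ℝ) < k := by exact_mod_cast hk1
      have h := hstep k (by omega)
      rw [sum_sub_distrib, sum_const, card_range, nsmul_eq_mul] at h
      have htel : (∑ i ∈ range k, a i) / k
          ≤ (∑ i ∈ range k, a i + a k) / (k + 1) + T / (k + 1) := by
        rw [← add_div, div_le_div_iff₀ hk (by positivity)]
        nlinarith
      have hH : (harmonicNum k + 1 / (k + 1) - 1) * T = (harmonicNum k - 1) * T + T / (k + 1) := by
        ring
      rw [sum_range_succ, harmonicNum_succ]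
      push_cast
      linarith [ih (by omega)]
  have hn' : (0 : ℝ) < n := by exact_mod_cast hn
  have hmean : (∑ i ∈ range n, a i) / n ≤ T := by rwa [div_le_iff₀ hn', mul_comm]
  linarith [key n hn le_rfl]

lemma le_harmonicNum_mul_of_sum_excess_le {n : ℕ} {L : Fin n → ℝ} {T : ℝ}
    (hL : ∀ i, 0 ≤ L i) (hT : 0 ≤ T)
    (hexcess : ∀ c, 0 ≤ c → ∑ i, max (L i - c) 0 ≤ T * #{i | c < L i}) (j : Fin n) :
    L j ≤ harmonicNum n * T := by
  set σ := Tuple.sort (OrderDual.toDual ∘ L)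
  have hσ : Antitone (L ∘ σ) := monotone_toDual_comp_iff.1 (Tuple.monotone_sort _)
  set a : ℕ → ℝ := fun i => if h : i < n then L (σ ⟨i, h⟩) else 0
  have ha : ∀ i : Fin n, a i = L (σ i) := fun i => dif_pos i.isLt
  have hsum : ∀ f : ℝ → ℝ, ∑ i ∈ range n, f (a i) = ∑ i, f (L i) := fun f => by
    rw [← Fin.sum_univ_eq_sum_range (fun i => f (a i))]
    simp only [ha]
    exact Equiv.sum_comp σ (fun i => f (L i))
  have hj : L j ≤ a 0 := by
    have hn : 0 < n := j.pos
    rw [show L j = L (σ (σ.symm j)) by simp, show (0 : ℕ) = ((⟨0, hn⟩ : Fin n) : ℕ) from rfl,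
      ha]
    exact hσ (Fin.le_def.2 (Nat.zero_le _))
  refine hj.trans (le_harmonicNum_mul_of_sum_range_sub_le j.pos ?_ fun k hk => ?_)
  · have h0 := hexcess 0 le_rfl
    simp only [sub_zero, max_eq_left (hL _)] at h0
    calc ∑ i ∈ range n, a i = ∑ i, L i := hsum id
      _ ≤ T * #{i | 0 < L i} := h0
      _ ≤ n * T := by
        rw [mul_comm]
        gcongr
        exact_mod_cast (card_filter_le _ _).trans (card_univ.trans (Fintype.card_fin n)).le
  · have hc : a k = L (σ ⟨k, hk⟩) := dif_pos hk
    have hcard : #{i | a k < L i} ≤ k := by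
      refine (card_le_card_of_injOn (fun i => (σ.symm i : ℕ)) (fun i hi => ?_)
        fun i _ j _ h => σ.symm.injective (Fin.ext h)).trans (card_range k).le
      rw [coe_filter, Set.mem_ofPred_eq, hc] at hi
      rw [mem_coe, mem_range]
      by_contra! hki
      have := hσ (show (⟨k, hk⟩ : Fin n) ≤ σ.symm i from Fin.le_def.2 hki)
      simp only [Function.comp_apply, Equiv.apply_symm_apply] at this
      linarith
    calc ∑ i ∈ range k, (a i - a k) ≤ ∑ i ∈ range k, max (a i - a k) 0 :=
          sum_le_sum fun i _ => le_max_left _ _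
      _ ≤ ∑ i ∈ range n, max (a i - a k) 0 :=
          sum_le_sum_of_subset_of_nonneg (range_subset_range.2 hk.le) fun i _ _ => le_max_right _ _
      _ = ∑ i, max (L i - a k) 0 := hsum fun v => max (v - a k) 0
      _ ≤ T * #{i | a k < L i} := hexcess _ (hc ▸ hL _)
      _ ≤ k * T := by
        rw [mul_comm]
        gcongr

lemma IsWFAlloc.maxEntry_sum_le {n m : ℕ} [NeZero n] {E : ReqSeq n m} {x : Fin m → Fin n → ℝ}
    (hx : IsWFAlloc E x) {ℓ : Fin n → ℝ} (hℓ : ℓ ∈ loads E) :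
    maxEntry (∑ t, x t) ≤ harmonicNum n * maxEntry ℓ := by
  refine maxEntry_le fun i => ?_
  rw [Finset.sum_apply]
  exact le_harmonicNum_mul_of_sum_excess_le (L := fun i => ∑ t, x t i)
    (fun i => sum_nonneg fun t _ => hx.1.nonneg t i)
    ((nonneg_of_mem_loads hℓ 0).trans (le_maxEntry ℓ 0))
    (fun c hc => hx.sum_excess_le_mul_card hℓ hc) i

lemma maxEntry_wfLoad_div_le {n m : ℕ} [NeZero n] (E : ReqSeq n m) :
    maxEntry (wfLoad E) / maxEntry (optLoad E) ≤ harmonicNum n := by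
  have hzero : maxEntry (0 : Fin n → ℝ) = 0 := maxEntry_const 0
  by_cases hW : ∃ x, IsWFAlloc E x
  · by_cases hO : ∃ ℓ, IsOpt E ℓ
    · rw [wfLoad, dif_pos hW, optLoad, dif_pos hO]
      have hℓ := hO.choose_spec.1
      exact div_le_of_le_mul₀ ((nonneg_of_mem_loads hℓ 0).trans (le_maxEntry _ 0))
        (harmonicNum_nonneg n) (hW.choose_spec.maxEntry_sum_le hℓ)
    · rw [optLoad, dif_neg hO, hzero, div_zero]
      exact harmonicNum_nonneg n
  · rw [wfLoad, dif_neg hW, hzero, zero_div]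
    exact harmonicNum_nonneg n

section Majorization

variable {n : ℕ}

lemma le_topSum (x : Fin n → ℝ) {k : ℕ} {s : Finset (Fin n)} (hs : #s = k) :
    ∑ i ∈ s, x i ≤ topSum x k :=
  le_csSup ((Set.toFinite _).image _).bddAbove ⟨s, hs, rfl⟩

lemma topSum_le {x : Fin n → ℝ} {k : ℕ} (hk : k ≤ n) {c : ℝ}
    (h : ∀ s : Finset (Fin n), #s = k → ∑ i ∈ s, x i ≤ c) : topSum x k ≤ c := by
  obtain ⟨s, -, hs⟩ := exists_subset_card_eq (s := (univ : Finset (Fin n))) (by simpa using hk)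
  exact csSup_le ⟨_, s, hs, rfl⟩ (Set.forall_mem_image.2 h)

lemma topSum_one (x : Fin n → ℝ) : topSum x 1 = maxEntry x := by
  rw [topSum, maxEntry]
  congr
  ext c
  constructor
  · rintro ⟨s, hs, rfl⟩
    obtain ⟨a, rfl⟩ := card_eq_one.1 hs
    exact ⟨a, (sum_singleton x a).symm⟩
  · rintro ⟨i, rfl⟩
    exact ⟨{i}, card_singleton i, sum_singleton x i⟩

lemma topSum_const {k : ℕ} (hk : k ≤ n) (c : ℝ) : topSum (fun _ : Fin n => c) k = k * c := by
  obtain ⟨s, -, hs⟩ := exists_subset_card_eq (s := (univ : Finset (Fin n))) (by simpa using hk)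
  refine le_antisymm (topSum_le hk fun t ht => ?_) ?_
  · rw [sum_const, ht, nsmul_eq_mul]
  · simpa [hs] using le_topSum (fun _ : Fin n => c) hs

/-- Induction on `k`, adding a point of the complement that is at least the complement's
average. -/
lemma exists_card_eq_mul_sum_le (x : Fin n → ℝ) {k : ℕ} (hk : k ≤ n) :
    ∃ s : Finset (Fin n), #s = k ∧ k * ∑ i, x i ≤ n * ∑ i ∈ s, x i := by
  induction k with
  | zero => exact ⟨∅, rfl, by simp⟩
  | succ k ih =>
    obtain ⟨s, hs, hsum⟩ := ih (by omega)
    have hcard : (#sᶜ : ℝ) = n - k := by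
      rw [card_compl, hs, Fintype.card_fin, Nat.cast_sub (by omega)]
    have hk' : (k : ℝ) + 1 ≤ n := by exact_mod_cast hk
    have hpos : (0 : ℝ) < n - k := by linarith
    have hsc : sᶜ.Nonempty := card_pos.1 (by exact_mod_cast hcard ▸ hpos)
    obtain ⟨j, hj, hjx⟩ := exists_le_of_sum_le hsc
      (f := fun _ => (∑ i ∈ sᶜ, x i) / #sᶜ) (g := x) (by
        rw [sum_const, nsmul_eq_mul, mul_div_cancel₀ _ (by exact_mod_cast hsc.card_pos.ne')])
    have hjs : j ∉ s := mem_compl.1 hj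
    have hcompl : ∑ i ∈ sᶜ, x i = ∑ i, x i - ∑ i ∈ s, x i := by
      linarith [sum_add_sum_compl s x]
    rw [hcard, hcompl, div_le_iff₀ hpos] at hjx
    refine ⟨insert j s, by rw [card_insert_of_notMem hjs, hs], ?_⟩
    rw [sum_insert hjs]
    push_cast
    nlinarith [mul_nonneg (by linarith : (0 : ℝ) ≤ n - k - 1)
      (by linarith : (0 : ℝ) ≤ n * ∑ i ∈ s, x i - k * ∑ i, x i)]

lemma majorizes_const_mean (x : Fin n → ℝ) : Majorizes x (fun _ => (∑ i, x i) / n) := by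
  rcases Nat.eq_zero_or_pos n with rfl | hn
  · rw [Subsingleton.elim (fun _ => _) x]
    exact ⟨rfl, fun _ _ => le_rfl⟩
  have hn' : (0 : ℝ) < n := by exact_mod_cast hn
  refine ⟨by simp [sum_const, mul_div_cancel₀ _ hn'.ne'], fun k hk => ?_⟩
  obtain ⟨s, hs, hsum⟩ := exists_card_eq_mul_sum_le x hk
  rw [topSum_const hk, ← mul_div_assoc, div_le_iff₀ hn', mul_comm _ (n : ℝ)]
  exact hsum.trans (mul_le_mul_of_nonneg_left (le_topSum x hs) hn'.le)

end Majorization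

lemma IsOpt.maxEntry_optLoad {n m : ℕ} [NeZero n] {E : ReqSeq n m} {ℓ : Fin n → ℝ}
    (hℓ : IsOpt E ℓ) : maxEntry (optLoad E) = maxEntry ℓ := by
  have hO : ∃ ℓ, IsOpt E ℓ := ⟨ℓ, hℓ⟩
  have h1 : 1 ≤ n := NeZero.one_le
  rw [optLoad, dif_pos hO, ← topSum_one, ← topSum_one]
  exact le_antisymm ((hO.choose_spec.2 ℓ hℓ.1).2 1 h1) ((hℓ.2 _ hO.choose_spec.1).2 1 h1)

def staircaseSeq (n : ℕ) : ReqSeq n n where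
  N t := Ici t
  q _ := 1
  N_nonempty _ := nonempty_Ici
  q_pos _ := one_pos

noncomputable def staircaseWF (n : ℕ) (t i : Fin n) : ℝ :=
  if t ≤ i then 1 / ((n - (t : ℕ) : ℕ) : ℝ) else 0

section Staircase

variable {n : ℕ}

lemma staircaseWF_mem_allocSet (t : Fin n) :
    staircaseWF n t ∈ allocSet n ((staircaseSeq n).N t) ((staircaseSeq n).q t) := by
  have hpos : (0 : ℝ) < ((n - (t : ℕ) : ℕ) : ℝ) := by exact_mod_cast Nat.sub_pos_of_lt t.isLt
  refine ⟨fun i => ?_, fun i hi => if_neg (by simpa [staircaseSeq] using hi), ?_⟩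
  · unfold staircaseWF
    split_ifs <;> positivity
  · have hIci : ({i | t ≤ i} : Finset (Fin n)) = Ici t := by
      ext
      simp
    show ∑ i, staircaseWF n t i = 1
    simp only [staircaseWF]
    rw [← sum_filter, sum_const, hIci, Fin.card_Ici, nsmul_eq_mul, mul_one_div, div_self hpos.ne']

lemma staircaseWF_add_prevLoad {x : Fin n → Fin n → ℝ} {t : Fin n}
    (hx : ∀ s < t, x s = staircaseWF n s) {j : Fin n} (hj : j ∈ (staircaseSeq n).N t) :
    staircaseWF n t j + prevLoad x t j = ∑ s ∈ Iic t, 1 / ((n - (s : ℕ) : ℕ) : ℝ) := by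
  rw [prevLoad_congr hx, add_prevLoad_eq_sum_Iic]
  exact sum_congr rfl fun s hs => if_pos ((mem_Iic.1 hs).trans (mem_Ici.1 hj))

lemma staircaseWF_isWFAlloc : IsWFAlloc (staircaseSeq n) (staircaseWF n) :=
  ⟨staircaseWF_mem_allocSet, fun t _ hy => inf'_add_le_of_level_eq _
    (staircaseWF_mem_allocSet t) (fun _ hj => staircaseWF_add_prevLoad (fun _ _ => rfl) hj) hy⟩

lemma IsWFAlloc.eq_staircaseWF {x : Fin n → Fin n → ℝ} (hx : IsWFAlloc (staircaseSeq n) x) :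
    x = staircaseWF n := by
  funext t
  induction t using WellFoundedLT.induction with
  | _ t ih =>
    exact eq_of_level_eq_of_inf'_le _ (staircaseWF_mem_allocSet t)
      (fun _ hj => staircaseWF_add_prevLoad ih hj) (hx.1 t) (hx.2 t _ (staircaseWF_mem_allocSet t))

lemma wfLoad_staircaseSeq : wfLoad (staircaseSeq n) = Hvec n (fun _ => 1) := by
  have hW : ∃ x, IsWFAlloc (staircaseSeq n) x := ⟨_, staircaseWF_isWFAlloc⟩
  rw [wfLoad, dif_pos hW, hW.choose_spec.eq_staircaseWF]
  funext i
  simp only [Finset.sum_apply, Hvec, staircaseWF]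
  rw [← sum_filter]

lemma one_mem_loads_staircaseSeq : (fun _ => 1) ∈ loads (staircaseSeq n) := by
  refine ⟨fun t => Pi.single t 1, fun t => ⟨fun i => ?_, fun i hi => ?_, ?_⟩, ?_⟩
  · exact (Pi.single_nonneg (α := fun _ : Fin n => ℝ)).2 zero_le_one i
  · exact Pi.single_eq_of_ne (by rintro rfl; simp [staircaseSeq] at hi) _
  · simp [staircaseSeq]
  · exact (univ_sum_single (fun _ : Fin n => (1 : ℝ))).symm

lemma isOpt_staircaseSeq (hn : 1 ≤ n) : IsOpt (staircaseSeq n) (fun _ => 1) := by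
  refine ⟨one_mem_loads_staircaseSeq, fun ℓ hℓ => ?_⟩
  have hmean : (∑ i, ℓ i) / n = 1 := by
    rw [sum_eq_of_mem_loads hℓ]
    simp [staircaseSeq, show (n : ℝ) ≠ 0 by positivity]
  simpa only [hmean] using majorizes_const_mean ℓ

end Staircase

/-- **Lemma (Makespan Competitive Ratio).**
`sup { Minimax(Hℓ)/Minimax(ℓ) : 0 ≤ ℓ(1) ≤ ⋯ ≤ ℓ(n), ℓ(n) > 0 } = H_n`; equivalently the
supremum over such `ℓ` of `(Σ_i ℓ(i)/(n − i + 1))/ℓ(n)` equals `H_n`, and the competitive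
ratio of water-filling for makespan minimization with `n` offline nodes equals `H_n`. -/
theorem makespan_competitive_ratio (n : ℕ) (hn : 1 ≤ n) :
    (sSup {r : ℝ | ∃ ℓ : Fin n → ℝ, (∀ i, 0 ≤ ℓ i) ∧ Monotone ℓ ∧
        0 < ℓ ⟨n - 1, by omega⟩ ∧
        r = maxEntry (Hvec n ℓ) / maxEntry ℓ} = harmonicNum n) ∧
    (sSup {r : ℝ | ∃ ℓ : Fin n → ℝ, (∀ i, 0 ≤ ℓ i) ∧ Monotone ℓ ∧
        0 < ℓ ⟨n - 1, by omega⟩ ∧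
        r = (∑ i : Fin n, ℓ i / ((n - (i : ℕ) : ℕ) : ℝ)) / ℓ ⟨n - 1, by omega⟩}
      = harmonicNum n) ∧
    (sSup {r : ℝ | ∃ (m : ℕ) (E : ReqSeq n m), 0 < ∑ t, E.q t ∧
        r = maxEntry (wfLoad E) / maxEntry (optLoad E)} = harmonicNum n) := by
  have : NeZero n := ⟨by omega⟩
  have hone : (∑ i : Fin n, 1 / ((n - (i : ℕ) : ℕ) : ℝ)) / 1 = harmonicNum n := by
    rw [div_one, sum_one_div_sub_eq_harmonicNum]
  refine ⟨IsGreatest.csSup_eq ⟨⟨fun _ => 1, fun _ => zero_le_one, monotone_const, one_pos,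
      by rw [maxEntry_Hvec_div_maxEntry hn (fun _ => zero_le_one) monotone_const, hone]⟩, ?_⟩,
    IsGreatest.csSup_eq ⟨⟨fun _ => 1, fun _ => zero_le_one, monotone_const, one_pos,
      hone.symm⟩, ?_⟩,
    IsGreatest.csSup_eq ⟨⟨n, staircaseSeq n, by simp [staircaseSeq]; omega, ?_⟩, ?_⟩⟩
  · rintro _ ⟨ℓ, h0, hℓ, hpos, rfl⟩
    exact (maxEntry_Hvec_div_maxEntry hn h0 hℓ).trans_le
      (sum_div_div_last_le_harmonicNum hn hℓ hpos)
  · rintro _ ⟨ℓ, -, hℓ, hpos, rfl⟩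
    exact sum_div_div_last_le_harmonicNum hn hℓ hpos
  · rw [wfLoad_staircaseSeq, (isOpt_staircaseSeq hn).maxEntry_optLoad,
      maxEntry_Hvec_div_maxEntry hn (fun _ => zero_le_one) monotone_const, hone]
  · rintro _ ⟨m, E, -, rfl⟩
    exact maxEntry_wfLoad_div_le E
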